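/- For all $x, y > 0$, the trigamma function satisfies $\dfrac{1}{\psi'(x+y)} > \dfrac{1}{\psi'(x)} + \dfrac{1}{\psi'(y)}$; equivalently, $\psi'(x+y)\left(\dfrac{1}{\psi'(x)} + \dfrac{1}{\psi'(y)}\right) < 1$. -/

import Mathlib

/-- The digamma function `ψ = Γ'/Γ`, as the derivative of `log ∘ Γ` on `(0,∞)`. -/
noncomputable def digamma (x : ℝ) : ℝ := deriv (fun y => Real.log (Real.Gamma y)) x

/-- The trigamma function `ψ'`. -/
noncomputable def trigamma : ℝ → ℝ := deriv digamma

/-!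
The functional equation `ψ(x + 1) = ψ(x) + 1/x` and the monotonicity of `ψ` (log-convexity of `Γ`)
force `ψ(x) - ψ(1) = ∑ₙ (1/(1 + n) - 1/(x + n))`, hence `ψ'(x) = ∑ₙ 1/(x + n)²` and
`ψ''(x) = -2 ∑ₙ 1/(x + n)³`. Comparing these series with telescoping sums gives
`ψ'(x) ≤ 1/x² + 1/x < -x ψ''(x)`, so `x ψ'(x)` is strictly decreasing. Thus `u = 1/ψ'` has
`u(x)/x` strictly increasing, and such a function is strictly superadditive:
`u(x) + u(y) < x u(x+y)/(x+y) + y u(x+y)/(x+y) = u(x+y)`.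
-/

open Real Set Filter Topology

lemma add_lt_apply_add_of_strictMonoOn_div {f : ℝ → ℝ}
    (hf : StrictMonoOn (fun x => f x / x) (Ioi 0)) {x y : ℝ} (hx : 0 < x) (hy : 0 < y) :
    f x + f y < f (x + y) := by
  have hxy : 0 < x + y := by positivity
  have key {a : ℝ} (ha : 0 < a) (hlt : a < x + y) : f a < a * (f (x + y) / (x + y)) := by
    have := hf ha hxy hlt
    rwa [div_lt_iff₀ ha, mul_comm] at this
  calc f x + f y < x * (f (x + y) / (x + y)) + y * (f (x + y) / (x + y)) :=
        add_lt_add (key hx (by linarith)) (key hy (by linarith))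
    _ = f (x + y) := by field_simp

lemma summable_one_div_add_nat_pow {x : ℝ} (hx : 0 < x) {p : ℕ} (hp : 1 < p) :
    Summable fun n : ℕ => 1 / (x + n) ^ p := by
  refine ((summable_one_div_nat_add_rpow x p).2 (mod_cast hp)).congr fun n => ?_
  rw [abs_of_pos (by positivity), rpow_natCast, add_comm]

lemma hasSum_sub_add_one {φ : ℝ → ℝ} {x : ℝ} (hφ : AntitoneOn φ (Ici x))
    (hlim : Tendsto φ atTop (𝓝 0)) :
    HasSum (fun n : ℕ => φ (x + n) - φ (x + n + 1)) (φ x) := by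
  have hnonneg (n : ℕ) : 0 ≤ φ (x + n) - φ (x + n + 1) :=
    sub_nonneg.2 <| hφ (by simp) (by rw [mem_Ici]; linarith [n.cast_nonneg (α := ℝ)]) (by linarith)
  refine (hasSum_iff_tendsto_nat_of_nonneg hnonneg _).2 ?_
  have hshift : Tendsto (fun n : ℕ => φ (x + n)) atTop (𝓝 0) :=
    hlim.comp (tendsto_atTop_add_const_left _ x tendsto_natCast_atTop_atTop)
  have hpartial (n : ℕ) :
      ∑ k ∈ Finset.range n, (φ (x + k) - φ (x + k + 1)) = φ x - φ (x + n) := by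
    simpa [add_assoc] using Finset.sum_range_sub' (fun k : ℕ => φ (x + k)) n
  simp_rw [hpartial]
  simpa using tendsto_const_nhds.sub hshift

lemma tsum_one_div_add_sq_le {x : ℝ} (hx : 0 < x) :
    ∑' n : ℕ, 1 / (x + n) ^ 2 ≤ 1 / x ^ 2 + 1 / x := by
  have htel := hasSum_sub_add_one (φ := fun s => 1 / s) (x := x)
    (fun a ha b _ hab => one_div_le_one_div_of_le (hx.trans_le ha) hab)
    (by simpa only [one_div] using tendsto_inv_atTop_zero)
  have hterm (n : ℕ) : 1 / (x + (n + 1 : ℕ)) ^ 2 ≤ 1 / (x + n) - 1 / (x + n + 1) := by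
    have hpos : 0 < x + n := by positivity
    have hdiff : 1 / (x + n) - 1 / (x + n + 1) = 1 / ((x + n) * (x + n + 1)) := by
      field_simp; ring
    rw [hdiff]
    push_cast
    gcongr
    nlinarith
  have hsum := summable_one_div_add_nat_pow hx one_lt_two
  have htail := ((summable_nat_add_iff 1).2 hsum).tsum_le_tsum hterm htel.summable
  rw [hsum.tsum_eq_zero_add]
  rw [htel.tsum_eq] at htail
  simpa using htail

lemma lt_tsum_one_div_add_cube {x : ℝ} (hx : 0 < x) :
    1 / (2 * x ^ 2) + 1 / (2 * x ^ 3) < ∑' n : ℕ, 1 / (x + n) ^ 3 := by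
  -- `2x φ(x)` is the bound `1/x² + 1/x` of `tsum_one_div_add_sq_le`
  set φ : ℝ → ℝ := fun s => 1 / (2 * s ^ 2) + 1 / (2 * s ^ 3)
  have hanti : AntitoneOn φ (Ici x) := fun a ha b _ hab => by
    have : 0 < a := hx.trans_le ha
    simp only [φ]; gcongr
  have hlim : Tendsto φ atTop (𝓝 0) := by
    have h := tendsto_inv_atTop_zero (𝕜 := ℝ)
    simpa [φ, div_eq_mul_inv, mul_comm, ← inv_pow] using
      ((h.pow 2).div_const 2).add ((h.pow 3).div_const 2)
  have hstep (s : ℝ) (hs : 0 < s) : φ s - φ (s + 1) < 1 / s ^ 3 := by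
    have key : 1 / s ^ 3 - (φ s - φ (s + 1)) = (2 * s + 1) / (2 * s ^ 3 * (s + 1) ^ 3) := by
      simp only [φ]; field_simp; ring
    have : 0 < (2 * s + 1) / (2 * s ^ 3 * (s + 1) ^ 3) := by positivity
    linarith
  exact hasSum_lt (fun n => (hstep _ (by positivity)).le) (i := 0) (by simpa using hstep x hx)
    (hasSum_sub_add_one hanti hlim) (summable_one_div_add_nat_pow hx (by norm_num)).hasSum

lemma hasDerivAt_const_sub_one_div_add {y : ℝ} (hy : 0 < y) (a : ℝ) (n : ℕ) :
    HasDerivAt (fun z : ℝ => a - 1 / (z + n)) (1 / (y + n) ^ 2) y := by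
  have h := (((hasDerivAt_id y).add_const (n : ℝ)).inv (by positivity)).const_sub a
  simpa [one_div, neg_div] using h

lemma hasDerivAt_one_div_add_sq {y : ℝ} (hy : 0 < y) (n : ℕ) :
    HasDerivAt (fun z : ℝ => 1 / (z + n) ^ 2) (-2 * (1 / (y + n) ^ 3)) y := by
  have hpos : 0 < y + n := by positivity
  have h := (((hasDerivAt_id y).add_const (n : ℝ)).fun_pow 2).fun_inv (by positivity)
  simp only [id, one_div] at h ⊢
  refine h.congr_deriv ?_
  field_simp
  ring

lemma hasDerivAt_tsum_one_div_add_sq {x : ℝ} (hx : 0 < x) :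
    HasDerivAt (fun z : ℝ => ∑' n : ℕ, 1 / (z + n) ^ 2) (-2 * ∑' n : ℕ, 1 / (x + n) ^ 3) x := by
  have hc : 0 < x / 2 := by positivity
  have hbound (n : ℕ) (y : ℝ) (hy : y ∈ Ioi (x / 2)) :
      ‖-2 * (1 / (y + n) ^ 3)‖ ≤ 2 * (1 / (x / 2 + n) ^ 3) := by
    rw [norm_mul, norm_neg, Real.norm_two, Real.norm_of_nonneg (by have := hc.trans hy; positivity)]
    gcongr
    exact le_of_lt hy
  rw [← tsum_mul_left]
  exact hasDerivAt_tsum_of_isPreconnected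
    ((summable_one_div_add_nat_pow hc (by norm_num)).mul_left 2) isOpen_Ioi isPreconnected_Ioi
    (fun n y hy => hasDerivAt_one_div_add_sq (hc.trans hy) n) hbound
    (half_lt_self hx) (summable_one_div_add_nat_pow hx one_lt_two) (half_lt_self hx)

lemma differentiableAt_log_Gamma {x : ℝ} (hx : 0 < x) :
    DifferentiableAt ℝ (fun y => log (Gamma y)) x := by
  have hne (m : ℕ) : x ≠ -m := by linarith [(m.cast_nonneg : (0 : ℝ) ≤ m)]
  exact (differentiableAt_Gamma hne).log (Gamma_ne_zero hne)

lemma digamma_add_one {x : ℝ} (hx : 0 < x) : digamma (x + 1) = digamma x + 1 / x := by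
  unfold digamma
  rw [← deriv_comp_add_const, one_div, ← deriv_log,
    ← deriv_add (differentiableAt_log_Gamma hx) (differentiableAt_log hx.ne')]
  apply EventuallyEq.deriv_eq
  filter_upwards [eventually_gt_nhds hx] with y hy
  rw [Gamma_add_one hy.ne', log_mul hy.ne' (Gamma_pos_of_pos hy).ne', add_comm]
  rfl

lemma digamma_add_nat {x : ℝ} (hx : 0 < x) (n : ℕ) :
    digamma (x + n) = digamma x + ∑ k ∈ Finset.range n, 1 / (x + k) := by
  induction n with
  | zero => simp
  | succ n ih =>
    rw [Nat.cast_succ, ← add_assoc, digamma_add_one (by positivity), ih, Finset.sum_range_succ,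
      add_assoc]

lemma monotoneOn_digamma : MonotoneOn digamma (Ioi 0) :=
  convexOn_log_Gamma.monotoneOn_deriv fun _ hx => differentiableAt_log_Gamma hx

lemma digamma_sub_digamma_le {a b : ℝ} (ha : 0 < a) (hab : a ≤ b) (m : ℕ) (hb : b ≤ a + m) :
    digamma b - digamma a ≤ m / a :=
  calc digamma b - digamma a ≤ digamma (a + m) - digamma a := by
        gcongr
        exact monotoneOn_digamma (ha.trans_le hab) (show 0 < a + m by positivity) hb
    _ = ∑ k ∈ Finset.range m, 1 / (a + k) := by rw [digamma_add_nat ha]; ring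
    _ ≤ ∑ k ∈ Finset.range m, 1 / a := by gcongr; simp
    _ = m / a := by rw [Finset.sum_const, Finset.card_range, nsmul_eq_mul, mul_one_div]

lemma tendsto_digamma_add_nat_sub_digamma_nat {x : ℝ} (hx : 0 < x) :
    Tendsto (fun n : ℕ => digamma (x + n) - digamma n) atTop (𝓝 0) := by
  obtain ⟨m, hm⟩ := exists_nat_ge x
  refine squeeze_zero' ?_ ?_ (tendsto_const_div_atTop_nhds_zero_nat (m : ℝ))
  · filter_upwards [eventually_gt_atTop 0] with n hn
    have hn' : (0 : ℝ) < n := by exact_mod_cast hn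
    exact sub_nonneg.2 (monotoneOn_digamma hn' (by positivity : (0 : ℝ) < x + n) (by linarith))
  · filter_upwards [eventually_gt_atTop 0] with n hn
    exact digamma_sub_digamma_le (by exact_mod_cast hn) (by linarith) m (by linarith)

lemma summable_and_hasDerivAt_digamma_series {x : ℝ} (hx : 0 < x) :
    Summable (fun n : ℕ => 1 / (1 + n) - 1 / (x + n)) ∧
    HasDerivAt (fun z : ℝ => ∑' n : ℕ, (1 / (1 + n) - 1 / (z + n)))
      (∑' n : ℕ, 1 / (x + n) ^ 2) x := by
  obtain ⟨c, hc, hxc, h1c⟩ : ∃ c : ℝ, 0 < c ∧ c < x ∧ c < 1 :=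
    ⟨min x 1 / 2, by positivity, by linarith [min_le_left x 1, lt_min hx one_pos],
      by linarith [min_le_right x 1, lt_min hx one_pos]⟩
  have hderiv : ∀ (n : ℕ) (y : ℝ), y ∈ Ioi c →
      HasDerivAt (fun z : ℝ => 1 / (1 + n) - 1 / (z + n)) (1 / (y + n) ^ 2) y := fun n y hy =>
    hasDerivAt_const_sub_one_div_add (hc.trans hy) _ n
  have hbound (n : ℕ) (y : ℝ) (hy : y ∈ Ioi c) : ‖1 / (y + n) ^ 2‖ ≤ 1 / (c + n) ^ 2 := by
    rw [Real.norm_of_nonneg (by have := hc.trans hy; positivity)]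
    gcongr
    exact le_of_lt hy
  have hu := summable_one_div_add_nat_pow hc one_lt_two
  have h1 : Summable (fun n : ℕ => 1 / (1 + (n : ℝ)) - 1 / (1 + n)) := by simp
  have hsum := summable_of_summable_hasDerivAt_of_isPreconnected hu isOpen_Ioi
    isPreconnected_Ioi hderiv hbound h1c h1 hxc
  have hder := hasDerivAt_tsum_of_isPreconnected hu isOpen_Ioi isPreconnected_Ioi hderiv hbound
    h1c h1 hxc
  exact ⟨hsum, hder⟩

lemma digamma_eq_tsum {x : ℝ} (hx : 0 < x) :
    digamma x = digamma 1 + ∑' n : ℕ, (1 / (1 + n) - 1 / (x + n)) := by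
  have hpartial (n : ℕ) : ∑ k ∈ Finset.range n, (1 / (1 + k) - 1 / (x + k)) =
      digamma x - digamma 1 -
        ((digamma (x + n) - digamma n) - (digamma (1 + n) - digamma n)) := by
    rw [Finset.sum_sub_distrib, digamma_add_nat hx, digamma_add_nat one_pos]
    ring
  have hlim : Tendsto (fun n => ∑ k ∈ Finset.range n, (1 / (1 + k) - 1 / (x + k))) atTop
      (𝓝 (digamma x - digamma 1)) := by
    simp_rw [hpartial]
    simpa using tendsto_const_nhds.sub ((tendsto_digamma_add_nat_sub_digamma_nat hx).sub
      (tendsto_digamma_add_nat_sub_digamma_nat one_pos))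
  have hsum := (summable_and_hasDerivAt_digamma_series hx).1.hasSum
  linarith [tendsto_nhds_unique hsum.tendsto_sum_nat hlim]

lemma trigamma_eq_tsum {x : ℝ} (hx : 0 < x) : trigamma x = ∑' n : ℕ, 1 / (x + n) ^ 2 := by
  have heq : digamma =ᶠ[𝓝 x] fun z => digamma 1 + ∑' n : ℕ, (1 / (1 + n) - 1 / (z + n)) := by
    filter_upwards [Ioi_mem_nhds hx] with z hz using digamma_eq_tsum hz
  rw [trigamma, heq.deriv_eq, ((summable_and_hasDerivAt_digamma_series hx).2.const_add _).deriv]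

lemma trigamma_pos {x : ℝ} (hx : 0 < x) : 0 < trigamma x := by
  rw [trigamma_eq_tsum hx]
  exact (summable_one_div_add_nat_pow hx one_lt_two).tsum_pos (fun n => by positivity) 0
    (by positivity)

lemma hasDerivAt_trigamma {x : ℝ} (hx : 0 < x) :
    HasDerivAt trigamma (-2 * ∑' n : ℕ, 1 / (x + n) ^ 3) x := by
  have heq : trigamma =ᶠ[𝓝 x] fun z => ∑' n : ℕ, 1 / (z + n) ^ 2 := by
    filter_upwards [Ioi_mem_nhds hx] with z hz using trigamma_eq_tsum hz
  exact (hasDerivAt_tsum_one_div_add_sq hx).congr_of_eventuallyEq heq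

lemma strictAntiOn_mul_trigamma : StrictAntiOn (fun x => x * trigamma x) (Ioi 0) := by
  have hderiv {x : ℝ} (hx : 0 < x) : HasDerivAt (fun x => x * trigamma x)
      (trigamma x - 2 * x * ∑' n : ℕ, 1 / (x + n) ^ 3) x := by
    refine ((hasDerivAt_id' x).mul (hasDerivAt_trigamma hx)).congr_deriv ?_
    ring
  refine strictAntiOn_of_deriv_neg (convex_Ioi 0)
    (fun x hx => (hderiv hx).continuousAt.continuousWithinAt) fun x hx => ?_
  rw [interior_Ioi] at hx
  have hx : 0 < x := hx
  rw [(hderiv hx).deriv, trigamma_eq_tsum hx]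
  have hsplit : 1 / x ^ 2 + 1 / x = 2 * x * (1 / (2 * x ^ 2) + 1 / (2 * x ^ 3)) := by
    field_simp; ring
  have hcube := mul_lt_mul_of_pos_left (lt_tsum_one_div_add_cube hx) (by positivity : 0 < 2 * x)
  linarith [tsum_one_div_add_sq_le hx]

lemma strictMonoOn_one_div_trigamma_div :
    StrictMonoOn (fun x => 1 / trigamma x / x) (Ioi 0) := fun a ha b hb hab => by
  have hb : 0 < b := hb
  have hlt : b * trigamma b < a * trigamma a := strictAntiOn_mul_trigamma ha hb hab
  simp only [div_div, mul_comm (trigamma _)]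
  exact one_div_lt_one_div_of_lt (mul_pos hb (trigamma_pos hb)) hlt

theorem one_div_trigamma_superadditive (x y : ℝ) (hx : 0 < x) (hy : 0 < y) :
    1 / trigamma (x + y) > 1 / trigamma x + 1 / trigamma y ∧
    trigamma (x + y) * (1 / trigamma x + 1 / trigamma y) < 1 := by
  have hsuper := add_lt_apply_add_of_strictMonoOn_div strictMonoOn_one_div_trigamma_div hx hy
  refine ⟨hsuper, ?_⟩
  calc trigamma (x + y) * (1 / trigamma x + 1 / trigamma y)
      < trigamma (x + y) * (1 / trigamma (x + y)) :=
        mul_lt_mul_of_pos_left hsuper (trigamma_pos (by positivity))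
    _ = 1 := mul_one_div_cancel (trigamma_pos (by positivity)).ne'
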